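/- For every n ∈ ℕ and every e ∈ ℕ, the graphon U_{e,s} defined as the constant 2^{-s} if Turing machine e has not halted on input 0 within s steps, and the constant 2^{-k} where k ≤ s is minimal with machine e halted within k steps otherwise, yields a sequence ⟨U_{e,s}⟩_{s∈ℕ} that is a Cauchy sequence in d₁ with d₁(U_{e,s}, U_{e,t}) ≤ 2^{-min(s,t)} for all s,t, whose limit is a random-free graphon if and only if machine e never halts on input 0. -/
import Mathlib


open MeasureTheory

noncomputable def muI : Measure ℝ := volume.restrict (Set.Icc 0 1)

noncomputable def mu2 : Measure (ℝ × ℝ) := muI.prod muI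

instance : SigmaFinite muI := by unfold muI; infer_instance

open Classical in
/-- The value of the constant graphon `U_{e,s}`: `2^{-s}` if machine `c` has not halted on
input `0` within `s` steps, and `2^{-k}` for the minimal `k ≤ s` at which it has halted,
otherwise. -/
noncomputable def haltVal (c : Nat.Partrec.Code) (s : ℕ) : ℝ :=
  if h : ∃ k, (Nat.Partrec.Code.evaln k c 0).isSome = true ∧ k ≤ s then
    (2 : ℝ)⁻¹ ^ Nat.find (p := fun k => (Nat.Partrec.Code.evaln k c 0).isSome = true)
      ⟨h.choose, h.choose_spec.1⟩
  else (2 : ℝ)⁻¹ ^ s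

lemma mu2_univ : mu2 Set.univ = 1 := by
  have hI : muI Set.univ = 1 := by
    simp [muI, Real.volume_Icc]
  rw [mu2, ← Set.univ_prod_univ, Measure.prod_prod, hI, one_mul]

open Classical in
lemma haltVal_pos (c : Nat.Partrec.Code) (s : ℕ) : 0 < haltVal c s := by
  rw [haltVal]
  split <;> positivity

open Classical in
lemma haltVal_of_halt (c : Nat.Partrec.Code)
    (hH : ∃ k, (Nat.Partrec.Code.evaln k c 0).isSome = true) (s : ℕ)
    (hs : Nat.find hH ≤ s) : haltVal c s = (2 : ℝ)⁻¹ ^ Nat.find hH := by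
  have h : ∃ k, (Nat.Partrec.Code.evaln k c 0).isSome = true ∧ k ≤ s :=
    ⟨Nat.find hH, Nat.find_spec hH, hs⟩
  rw [haltVal, dif_pos h]

open Classical in
lemma haltVal_of_not_halt (c : Nat.Partrec.Code) (s : ℕ)
    (h : ∀ k, (Nat.Partrec.Code.evaln k c 0).isSome = true → s < k) :
    haltVal c s = (2 : ℝ)⁻¹ ^ s := by
  rw [haltVal, dif_neg]
  rintro ⟨k, hk, hks⟩
  exact absurd hks (not_le.mpr (h k hk))

open Classical in
lemma haltVal_antitone (c : Nat.Partrec.Code) {s t : ℕ} (hst : s ≤ t) :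
    haltVal c t ≤ haltVal c s := by
  by_cases h : ∃ k, (Nat.Partrec.Code.evaln k c 0).isSome = true ∧ k ≤ s
  · obtain ⟨k, hk, hks⟩ := h
    have hH : ∃ k, (Nat.Partrec.Code.evaln k c 0).isSome = true := ⟨k, hk⟩
    have hNs : Nat.find hH ≤ s := le_trans (Nat.find_min' hH hk) hks
    rw [haltVal_of_halt c hH s hNs, haltVal_of_halt c hH t (hNs.trans hst)]
  · push_neg at h
    rw [haltVal_of_not_halt c s h]
    by_cases h2 : ∃ k, (Nat.Partrec.Code.evaln k c 0).isSome = true ∧ k ≤ t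
    · obtain ⟨k, hk, hkt⟩ := h2
      have hH : ∃ k, (Nat.Partrec.Code.evaln k c 0).isSome = true := ⟨k, hk⟩
      have hNt : Nat.find hH ≤ t := le_trans (Nat.find_min' hH hk) hkt
      rw [haltVal_of_halt c hH t hNt]
      have hsN : s < Nat.find hH := h _ (Nat.find_spec hH)
      exact pow_le_pow_of_le_one (by norm_num) (by norm_num) hsN.le
    · push_neg at h2
      rw [haltVal_of_not_halt c t h2]
      exact pow_le_pow_of_le_one (by norm_num) (by norm_num) hst

open Classical in
lemma haltVal_diff_le (c : Nat.Partrec.Code) {s t : ℕ} (hst : s ≤ t) :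
    haltVal c s - haltVal c t ≤ (2 : ℝ)⁻¹ ^ s := by
  by_cases h : ∃ k, (Nat.Partrec.Code.evaln k c 0).isSome = true ∧ k ≤ s
  · obtain ⟨k, hk, hks⟩ := h
    have hH : ∃ k, (Nat.Partrec.Code.evaln k c 0).isSome = true := ⟨k, hk⟩
    have hNs : Nat.find hH ≤ s := le_trans (Nat.find_min' hH hk) hks
    rw [haltVal_of_halt c hH s hNs, haltVal_of_halt c hH t (hNs.trans hst), sub_self]
    positivity
  · push_neg at h
    rw [haltVal_of_not_halt c s h]
    have := haltVal_pos c t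
    linarith

/-- The constant graphons `U_{e,s} ≡ haltVal c s` form a `d₁`-Cauchy sequence with
`d₁(U_{e,s}, U_{e,t}) ≤ 2^{-min(s,t)}`, whose limit is a random-free graphon iff machine
`c` never halts on input `0`. -/
theorem haltVal_name_randomFree_iff_not_halt (c : Nat.Partrec.Code) :
    (∀ s t : ℕ, ∫ p : ℝ × ℝ, |haltVal c s - haltVal c t| ∂mu2 ≤ 2⁻¹ ^ min s t) ∧
    ∃ L : ℝ, Filter.Tendsto (haltVal c) Filter.atTop (nhds L) ∧
      (mu2 {p : ℝ × ℝ | L = 0 ∨ L = 1} = 1 ↔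
        ∀ k, Nat.Partrec.Code.evaln k c 0 = Option.none) := by
  classical
  constructor
  · intro s t
    have hconst : ∫ _ : ℝ × ℝ, |haltVal c s - haltVal c t| ∂mu2
        = (mu2 Set.univ).toReal • |haltVal c s - haltVal c t| := integral_const _
    rw [hconst, mu2_univ]
    simp only [ENNReal.toReal_one, one_smul]
    rcases le_total s t with hst | hts
    · rw [min_eq_left hst, abs_of_nonneg (by linarith [haltVal_antitone c hst])]
      exact haltVal_diff_le c hst
    · rw [min_eq_right hts, abs_of_nonpos (by linarith [haltVal_antitone c hts]), neg_sub]
      exact haltVal_diff_le c hts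
  · by_cases hH : ∃ k, (Nat.Partrec.Code.evaln k c 0).isSome = true
    · refine ⟨(2 : ℝ)⁻¹ ^ Nat.find hH, ?_, ?_⟩
      · apply Filter.Tendsto.congr' _ tendsto_const_nhds
        filter_upwards [Filter.eventually_ge_atTop (Nat.find hH)] with s hs
        exact (haltVal_of_halt c hH s hs).symm
      · have hN0 : Nat.find hH ≠ 0 := by
          intro h0
          have := Nat.find_spec hH
          rw [h0] at this
          simp [Nat.Partrec.Code.evaln] at this
        have hL0 : (2 : ℝ)⁻¹ ^ Nat.find hH ≠ 0 := by positivity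
        have hL1 : (2 : ℝ)⁻¹ ^ Nat.find hH ≠ 1 := by
          have : (2 : ℝ)⁻¹ ^ Nat.find hH < 1 :=
            pow_lt_one₀ (by norm_num) (by norm_num) hN0
          linarith
        have hset : {p : ℝ × ℝ | (2 : ℝ)⁻¹ ^ Nat.find hH = 0 ∨ (2 : ℝ)⁻¹ ^ Nat.find hH = 1}
            = ∅ := by
          ext p
          simp only [Set.mem_setOf_eq, Set.mem_empty_iff_false, iff_false, not_or]
          exact ⟨hL0, hL1⟩
        rw [hset, measure_empty]
        refine iff_of_false (by simp) (fun h => ?_)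
        have := Nat.find_spec hH
        rw [h (Nat.find hH)] at this
        simp at this
    · push_neg at hH
      have hnone : ∀ k, Nat.Partrec.Code.evaln k c 0 = Option.none := by
        intro k
        exact Option.not_isSome_iff_eq_none.mp (by simpa using hH k)
      refine ⟨0, ?_, ?_⟩
      · have heq : ∀ s, haltVal c s = (2 : ℝ)⁻¹ ^ s := fun s =>
          haltVal_of_not_halt c s (fun k hk => absurd hk (by simp [hnone k]))
        rw [funext heq]
        exact tendsto_pow_atTop_nhds_zero_of_lt_one (by norm_num) (by norm_num)
      · have hset : {p : ℝ × ℝ | (0 : ℝ) = 0 ∨ (0 : ℝ) = 1} = Set.univ := by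
          ext p; simp
        rw [hset, mu2_univ]
        exact iff_of_true rfl hnone
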